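/- Let r ≥ 1 be an integer, let x_1,…,x_r be complex numbers such that x_j ∉ {0,1,−1} for all j and x_j² ≠ x_k² for j ≠ k, and let α, β, γ be complex numbers with γ ≠ 0 and γ ≠ 2. Then d(x) = 2r + (2(1−α)(1−β)/(γ(γ−2))) · (1 − ∏_{k=1}^r ((γ−1)² − x_k²)/(1 − x_k²)). -/

import Mathlib

/-!
Let `f(z) = (z+α)(z+β) ∏ⱼ ((z+γ)² - xⱼ²) / ((z+1)(z+γ/2) ∏ⱼ (z² - xⱼ²))`. Numerator and
denominator are monic of degree `2r+2`, so the residues of `f` at its poles `±xₖ, -1, -γ/2` add up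
to the difference of the root sums of denominator and numerator, `2rγ + α + β - 1 - γ/2`
(Lagrange interpolation of numerator minus denominator, a polynomial of degree `< 2r+2`).
The residues at `xₖ` and `-xₖ` are `γ a(x,k)` and `γ b(x,k)`, those at `-1` and `-γ/2` are
explicit, and solving for `d(x)` gives the formula whenever the poles are distinct, i.e.
`γ ≠ ±2xₖ`. Both sides are continuous in `γ ∉ {0, 2}`, which removes that restriction.
-/

open Finset Polynomial Topology

namespace Lagrange

theorem prod_erase_sub_eq_eval_of_nodal_eq {R ι : Type*} [CommRing R] [IsDomain R]
    [DecidableEq ι] {s : Finset ι} {v : ι → R} {i : ι} (hi : i ∈ s) {q : R[X]}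
    (h : nodal s v = (X - C (v i)) * q) : ∏ j ∈ s.erase i, (v i - v j) = q.eval (v i) := by
  rw [nodal_eq_mul_nodal_erase hi] at h
  rw [← eval_nodal, mul_left_cancel₀ (X_sub_C_ne_zero _) h]

theorem sum_eval_nodal_div_prod_sub {F ι : Type*} [Field F] [DecidableEq ι] {s : Finset ι}
    {v : ι → F} (hvs : Set.InjOn v s) (hs : s.Nonempty) (u : ι → F) :
    ∑ i ∈ s, (nodal s u).eval (v i) / ∏ j ∈ s.erase i, (v i - v j)
      = ∑ i ∈ s, v i - ∑ i ∈ s, u i := by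
  have hdeg : (nodal s u - nodal s v).degree < #s := by
    rw [← degree_nodal (v := u)]
    exact degree_sub_lt_left (by rw [degree_nodal, degree_nodal]) nodal_ne_zero
      (by rw [nodal_monic.leadingCoeff, nodal_monic.leadingCoeff])
  have hcoeff (w : ι → F) : (nodal s w).coeff (#s - 1) = -∑ i ∈ s, w i := by
    rw [nodal_eq, prod_X_sub_C_coeff_card_pred _ _ hs.card_pos]
  have hsum := coeff_eq_sum hvs hdeg
  rw [coeff_sub, hcoeff, hcoeff] at hsum
  rw [sum_congr rfl fun i hi => by rw [← sub_zero ((nodal s u).eval (v i)),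
    ← eval_nodal_at_node hi, ← eval_sub], ← hsum]
  ring

end Lagrange

theorem eq_of_continuousAt_of_eq_off_finite {X Y : Type*} [TopologicalSpace X] [T1Space X]
    [TopologicalSpace Y] [T2Space Y] {f g : X → Y} {z : X} [(𝓝[≠] z).NeBot]
    (hf : ContinuousAt f z) (hg : ContinuousAt g z) {S : Set X} (hS : S.Finite)
    (hfg : ∀ w ∉ S, f w = g w) : f z = g z :=
  tendsto_nhds_unique_of_eventuallyEq (hf.tendsto.mono_left nhdsWithin_le_nhds)
    (hg.tendsto.mono_left nhdsWithin_le_nhds)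
    (Filter.mem_of_superset (nhdsNE_le_cofinite z hS.compl_mem_cofinite) hfg)

namespace ResidueSum

variable {r : ℕ} (x : Fin r → ℂ) (α β γ : ℂ)

noncomputable def poles : Fin r ⊕ Fin r ⊕ Fin 2 → ℂ :=
  Sum.elim x (Sum.elim (-x) ![-1, -(γ / 2)])

def zeros : Fin r ⊕ Fin r ⊕ Fin 2 → ℂ :=
  Sum.elim (fun k => x k - γ) (Sum.elim (fun k => -x k - γ) ![-α, -β])

noncomputable def residue (i : Fin r ⊕ Fin r ⊕ Fin 2) : ℂ :=
  (Lagrange.nodal univ (zeros x α β γ)).eval (poles x γ i)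
    / ∏ j ∈ univ.erase i, (poles x γ i - poles x γ j)

/-- `a(x,k) = residueTerm x α β γ k (x k)` and `b(x,k) = residueTerm x α β γ k (-x k)`. -/
noncomputable def residueTerm (k : Fin r) (c : ℂ) : ℂ :=
  (c + α) * (c + β) / (c * (c + 1))
    * ∏ j ∈ univ.erase k, ((c + γ) ^ 2 - x j ^ 2) / (c ^ 2 - x j ^ 2)

noncomputable def dSum : ℂ :=
  ∑ k, (residueTerm x α β γ k (x k) + residueTerm x α β γ k (-x k))

noncomputable def closedForm : ℂ :=
  2 * r + 2 * (1 - α) * (1 - β) / (γ * (γ - 2))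
    * (1 - ∏ k, ((γ - 1) ^ 2 - x k ^ 2) / (1 - x k ^ 2))

theorem sum_poles : ∑ i, poles x γ i = -1 - γ / 2 := by
  simp only [poles, Fintype.sum_sum_type, Fin.sum_univ_two, Sum.elim_inl, Sum.elim_inr,
    Pi.neg_apply, sum_neg_distrib, Matrix.cons_val_zero, Matrix.cons_val_one,
    Matrix.cons_val_fin_one]
  ring

theorem sum_zeros : ∑ i, zeros x α β γ i = -(2 * r * γ) - α - β := by
  simp only [zeros, Fintype.sum_sum_type, Fin.sum_univ_two, Sum.elim_inl, Sum.elim_inr,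
    sum_sub_distrib, sum_neg_distrib, sum_const, card_univ, Fintype.card_fin, nsmul_eq_mul,
    Matrix.cons_val_zero, Matrix.cons_val_one, Matrix.cons_val_fin_one]
  ring

theorem eval_nodal_zeros (c : ℂ) :
    (Lagrange.nodal univ (zeros x α β γ)).eval c
      = (c + α) * (c + β) * ∏ j, ((c + γ) ^ 2 - x j ^ 2) := by
  rw [Lagrange.eval_nodal, Fintype.prod_sum_type, Fintype.prod_sum_type, Fin.prod_univ_two,
    ← mul_assoc, ← prod_mul_distrib, mul_comm]
  congr 1
  · simp [zeros]
  · exact prod_congr rfl fun j _ => by simp only [zeros, Sum.elim_inl, Sum.elim_inr]; ring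

theorem nodal_poles : Lagrange.nodal univ (poles x γ)
    = (X + 1) * (X + C (γ / 2)) * ∏ j, (X ^ 2 - C (x j) ^ 2) := by
  rw [Lagrange.nodal, Fintype.prod_sum_type, Fintype.prod_sum_type, Fin.prod_univ_two,
    ← mul_assoc, ← prod_mul_distrib, mul_comm]
  congr 1
  · simp [poles]
  · refine prod_congr rfl fun j _ => ?_
    simp only [poles, Sum.elim_inl, Sum.elim_inr, Pi.neg_apply, map_neg]
    ring

theorem residueTerm_neg (k : Fin r) :
    residueTerm x α β γ k (-x k) = (x k - α) * (x k - β) / (x k * (x k - 1))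
      * ∏ j ∈ univ.erase k, ((x k - γ) ^ 2 - x j ^ 2) / (x k ^ 2 - x j ^ 2) := by
  unfold residueTerm
  congr 1
  · congr 1 <;> ring
  · exact prod_congr rfl fun j _ => by ring

variable {x γ}

theorem prod_erase_sub_poles_of_sq_eq {i : Fin r ⊕ Fin r ⊕ Fin 2} {k : Fin r}
    (hi : poles x γ i ^ 2 = x k ^ 2) :
    ∏ j ∈ univ.erase i, (poles x γ i - poles x γ j) = poles x γ i * (poles x γ i + 1)
      * (2 * poles x γ i + γ) * ∏ j ∈ univ.erase k, (poles x γ i ^ 2 - x j ^ 2) := by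
  set c := poles x γ i
  rw [Lagrange.prod_erase_sub_eq_eval_of_nodal_eq (mem_univ i)
    (q := (X + C c) * (X + 1) * (X + C (γ / 2)) * ∏ j ∈ univ.erase k, (X ^ 2 - C (x j) ^ 2))]
  · simp only [eval_mul, eval_add, eval_sub, eval_pow, eval_X, eval_C, eval_one, eval_prod]
    ring
  · have hC : C c ^ 2 = C (x k) ^ 2 := by rw [← map_pow, hi, map_pow]
    rw [nodal_poles, ← mul_prod_erase univ _ (mem_univ k)]
    linear_combination ((X + 1) * (X + C (γ / 2)) * ∏ j ∈ univ.erase k, (X ^ 2 - C (x j) ^ 2)) * hC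

theorem prod_erase_sub_poles_neg_one :
    ∏ j ∈ univ.erase (.inr (.inr 0)), (poles x γ (.inr (.inr 0)) - poles x γ j)
      = (γ / 2 - 1) * ∏ j, (1 - x j ^ 2) := by
  rw [Lagrange.prod_erase_sub_eq_eval_of_nodal_eq (mem_univ _)
    (q := (X + C (γ / 2)) * ∏ j, (X ^ 2 - C (x j) ^ 2))]
  · simp only [poles, Sum.elim_inr, Matrix.cons_val_zero, eval_mul, eval_add, eval_sub, eval_pow,
      eval_X, eval_C, eval_prod, neg_one_sq]
    ring
  · rw [nodal_poles]
    simp only [poles, Sum.elim_inr, Matrix.cons_val_zero, map_neg, map_one]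
    ring

theorem prod_erase_sub_poles_neg_half :
    ∏ j ∈ univ.erase (.inr (.inr 1)), (poles x γ (.inr (.inr 1)) - poles x γ j)
      = (1 - γ / 2) * ∏ j, ((γ / 2) ^ 2 - x j ^ 2) := by
  rw [Lagrange.prod_erase_sub_eq_eval_of_nodal_eq (mem_univ _)
    (q := (X + 1) * ∏ j, (X ^ 2 - C (x j) ^ 2))]
  · simp only [poles, Sum.elim_inr, Matrix.cons_val_one, Matrix.cons_val_zero, eval_mul, eval_add,
      eval_sub, eval_pow, eval_X, eval_C, eval_one, eval_prod, neg_sq]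
    ring
  · rw [nodal_poles]
    simp only [poles, Sum.elim_inr, Matrix.cons_val_one, Matrix.cons_val_fin_one, map_neg]
    ring

theorem poles_injective (hx0 : ∀ j, x j ≠ 0) (hx1 : ∀ j, x j ^ 2 ≠ 1)
    (hxx : ∀ j k : Fin r, j ≠ k → x j ^ 2 ≠ x k ^ 2) (hγx : ∀ j, (γ / 2) ^ 2 ≠ x j ^ 2)
    (hγ2 : γ ≠ 2) : Function.Injective (poles x γ) := by
  have hsq : ∀ k l, x k ^ 2 = x l ^ 2 → k = l := fun k l h => by_contra fun hkl => hxx k l hkl h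
  rintro (k | k | i) (l | l | j) h <;> (try fin_cases i) <;> (try fin_cases j) <;>
    simp only [poles, Sum.elim_inl, Sum.elim_inr, Pi.neg_apply, Fin.zero_eta, Fin.mk_one,
      Matrix.cons_val_zero, Matrix.cons_val_one, Matrix.cons_val_fin_one] at h
  all_goals grind

theorem sum_residue (hinj : Function.Injective (poles x γ)) :
    ∑ i, residue x α β γ i = 2 * r * γ + α + β - 1 - γ / 2 := by
  simp only [residue]
  rw [Lagrange.sum_eval_nodal_div_prod_sub hinj.injOn univ_nonempty, sum_poles, sum_zeros]
  ring

theorem residue_of_sq_eq {i : Fin r ⊕ Fin r ⊕ Fin 2} {k : Fin r}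
    (hi : poles x γ i ^ 2 = x k ^ 2) (hγx : (γ / 2) ^ 2 ≠ x k ^ 2) :
    residue x α β γ i = γ * residueTerm x α β γ k (poles x γ i) := by
  rw [residue, residueTerm, prod_erase_sub_poles_of_sq_eq hi, eval_nodal_zeros]
  generalize poles x γ i = c at hi ⊢
  -- `c * 2 + γ` rather than `2 * c + γ`: this is the form in which `field_simp` looks for it
  have hcγ : c * 2 + γ ≠ 0 := fun h =>
    hγx (by rw [← hi, show c = -(γ / 2) by linear_combination h / 2]; ring)
  rw [← mul_prod_erase univ _ (mem_univ k), ← hi, prod_div_distrib,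
    show (c + γ) ^ 2 - c ^ 2 = γ * (2 * c + γ) by ring]
  field_simp

theorem residue_neg_one :
    residue x α β γ (.inr (.inr 0)) = 2 * (1 - α) * (1 - β) / (γ - 2)
      * ∏ k, ((γ - 1) ^ 2 - x k ^ 2) / (1 - x k ^ 2) := by
  rw [residue, prod_erase_sub_poles_neg_one, eval_nodal_zeros, prod_div_distrib]
  simp only [poles, Sum.elim_inr, Matrix.cons_val_zero]
  rw [show ∏ j, ((-1 + γ) ^ 2 - x j ^ 2) = ∏ j, ((γ - 1) ^ 2 - x j ^ 2) from
    prod_congr rfl fun j _ => by ring]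
  field_simp
  ring

theorem residue_neg_half (hγx : ∀ j, (γ / 2) ^ 2 ≠ x j ^ 2) :
    residue x α β γ (.inr (.inr 1)) = (α - γ / 2) * (β - γ / 2) / (1 - γ / 2) := by
  have hW : ∏ j, ((γ / 2) ^ 2 - x j ^ 2) ≠ 0 :=
    prod_ne_zero_iff.mpr fun j _ => sub_ne_zero.mpr (hγx j)
  rw [residue, prod_erase_sub_poles_neg_half, eval_nodal_zeros]
  simp only [poles, Sum.elim_inr, Matrix.cons_val_one, Matrix.cons_val_zero]
  rw [show ∏ j, ((-(γ / 2) + γ) ^ 2 - x j ^ 2) = ∏ j, ((γ / 2) ^ 2 - x j ^ 2) from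
    prod_congr rfl fun j _ => by ring, mul_div_mul_right _ _ hW]
  ring

theorem dSum_eq_closedForm_of_sq_ne (hx0 : ∀ j, x j ≠ 0) (hx1 : ∀ j, x j ^ 2 ≠ 1)
    (hxx : ∀ j k : Fin r, j ≠ k → x j ^ 2 ≠ x k ^ 2) (hγ0 : γ ≠ 0) (hγ2 : γ ≠ 2)
    (hγx : ∀ j, (γ / 2) ^ 2 ≠ x j ^ 2) : dSum x α β γ = closedForm x α β γ := by
  have h := sum_residue α β (poles_injective hx0 hx1 hxx hγx hγ2)
  rw [Fintype.sum_sum_type, Fintype.sum_sum_type, Fin.sum_univ_two, residue_neg_one α β,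
    residue_neg_half α β hγx,
    sum_congr rfl fun k _ => residue_of_sq_eq (i := .inl k) α β rfl (hγx k),
    sum_congr rfl fun k _ => residue_of_sq_eq (i := .inr (.inl k)) α β (neg_sq _) (hγx k),
    ← add_assoc, ← sum_add_distrib] at h
  simp only [← mul_add, ← mul_sum, poles, Sum.elim_inl, Sum.elim_inr, Pi.neg_apply] at h
  change γ * dSum x α β γ + _ = _ at h
  rw [closedForm, ← mul_right_inj' hγ0]
  linear_combination (norm := skip) h
  field_simp
  ring

theorem dSum_eq_closedForm (hx0 : ∀ j, x j ≠ 0) (hx1 : ∀ j, x j ^ 2 ≠ 1)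
    (hxx : ∀ j k : Fin r, j ≠ k → x j ^ 2 ≠ x k ^ 2) (hγ0 : γ ≠ 0) (hγ2 : γ ≠ 2) :
    dSum x α β γ = closedForm x α β γ := by
  refine eq_of_continuousAt_of_eq_off_finite (f := dSum x α β) (g := closedForm x α β)
    (S := {0, 2} ∪ ⋃ k, {2 * x k, -(2 * x k)}) ?_ ?_ (Set.toFinite _) fun t ht => ?_
  · unfold dSum residueTerm
    fun_prop
  · unfold closedForm
    fun_prop (disch := exact mul_ne_zero hγ0 (sub_ne_zero.mpr hγ2))
  · simp only [Set.mem_union, Set.mem_insert_iff, Set.mem_singleton_iff, Set.mem_iUnion,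
      not_or, not_exists] at ht
    obtain ⟨⟨ht0, ht2⟩, htx⟩ := ht
    refine dSum_eq_closedForm_of_sq_ne α β hx0 hx1 hxx ht0 ht2 fun j h => ?_
    rcases sq_eq_sq_iff_eq_or_eq_neg.mp h with h | h
    · exact (htx j).1 (by linear_combination 2 * h)
    · exact (htx j).2 (by linear_combination 2 * h)

end ResidueSum

open ResidueSum in
theorem dx_formula_gamma_ne_zero_two (r : ℕ) (x : Fin r → ℂ)
    (hx0 : ∀ j, x j ≠ 0) (hx1 : ∀ j, x j ≠ 1) (hxm1 : ∀ j, x j ≠ -1)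
    (hxx : ∀ j k : Fin r, j ≠ k → (x j) ^ 2 ≠ (x k) ^ 2)
    (α β γ : ℂ) (hγ0 : γ ≠ 0) (hγ2 : γ ≠ 2) :
    (∑ k : Fin r,
      (((x k + α) * (x k + β)) / (x k * (x k + 1)) *
          ∏ j ∈ univ.erase k, ((x k + γ) ^ 2 - (x j) ^ 2) / ((x k) ^ 2 - (x j) ^ 2)
        + ((x k - α) * (x k - β)) / (x k * (x k - 1)) *
          ∏ j ∈ univ.erase k, ((x k - γ) ^ 2 - (x j) ^ 2) / ((x k) ^ 2 - (x j) ^ 2)))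
      = 2 * r + (2 * (1 - α) * (1 - β) / (γ * (γ - 2))) *
          (1 - ∏ k : Fin r, ((γ - 1) ^ 2 - (x k) ^ 2) / (1 - (x k) ^ 2)) := by
  have hsq (j : Fin r) : x j ^ 2 ≠ 1 := fun h => (sq_eq_one_iff.mp h).elim (hx1 j) (hxm1 j)
  simp only [← residueTerm_neg]
  exact dSum_eq_closedForm α β hx0 hsq hxx hγ0 hγ2
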